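/- For n ≥ 2 and all integers a, b ≥ 0 with a ≤ 2^r, b ≤ 2^r and a·b ≤ 2^r: N_r(a)·N_r(b) ≤ N_r(a·b). -/

import Mathlib

/-- Whether the `j`-th coordinate of the edge `e` equals the distinguished vertex
(the first vertex of its side, representing `v_{j+1} = 1`). -/
def vcond {n r : ℕ} (e : Fin r → Fin n) (j : ℕ) : Bool :=
  if h : j < r then decide ((e ⟨j, h⟩ : ℕ) = 0) else false

/-- The nested condition `v_{j+1} ∈ e σ₁ (v_{j+2} ∈ e σ₂ (⋯))` determined by a
sequence `σ` over `{∧, ∨}` (where `false` encodes `∧` and `true` encodes `∨`). -/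
def edgeCond {n r : ℕ} (e : Fin r → Fin n) : ℕ → List Bool → Bool
  | j, [] => vcond e j
  | j, false :: s => vcond e j && edgeCond e (j + 1) s
  | j, true :: s => vcond e j || edgeCond e (j + 1) s

/-- `F_r(σ)`: the set of edges of `[n]^r` satisfying the nested condition given by `σ`. -/
def Fset (n r : ℕ) (σ : List Bool) : Finset (Fin r → Fin n) :=
  Finset.univ.filter (fun e => edgeCond e 0 σ = true)

/-- `f_r(σ) = |F_r(σ)|`. -/
def fval (n r : ℕ) (σ : List Bool) : ℕ := (Fset n r σ).card

/-- `Ψ_r`: the sequences over `{∧, ∨}` of length at most `r - 1`. -/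
def PsiSet (r : ℕ) : Finset (List Bool) :=
  (Finset.range r).biUnion (fun m => (Finset.univ : Finset (Fin m → Bool)).image List.ofFn)

/-- The set of values `{f_r(σ) : σ ∈ Σ_r}`, where `f_r(α) = 0` and `f_r(ω) = n ^ r`. -/
def Nvals (n r : ℕ) : Finset ℕ :=
  insert 0 (insert (n ^ r) ((PsiSet r).image (fval n r)))

/-- `N_r(i)`: the `(i+1)`-st smallest element of `{f_r(σ) : σ ∈ Σ_r}`. -/
def Nseq (n r i : ℕ) : ℕ := (Finset.sort (Nvals n r) (· ≤ ·)).getD i 0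

/-!
Write `q = n - 1` and `M(m) = bitWeightSum q m = ∑_{j < m} q ^ s(j)`, where `s(j)` is the
binary digit sum of `j`. Splitting off the first coordinate gives `f_{r+1}(∧σ) = f_r(σ)` and
`f_{r+1}(∨σ) = n^r + q f_r(σ)`, which is the recursion `M(2^r + t) = n^r + q M(t)`; so reading
`σ` as the binary number with digits `σ` followed by a final `1` identifies `f_r(σ)` with `M` at
that number, `{f_r(σ)}` is `M` on `[0, 2^r]`, and `N_r(i) = M(i)` as `M` is strictly increasing.

The inequality is then about `M`, which obeys `M(2m) = (q+1) M(m)` and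
`M(2m+1) = q M(m) + M(m+1)`. Induction on `u + v` through these gives
`M(u) + q M(v) ≤ M(u + v)` for `v ≤ u`, and induction on `b` gives `M(a) M(b) ≤ M(ab)`,
the odd step being `M(a) M(2b+1) = q M(a) M(b) + M(a) M(b+1) ≤ q M(ab) + M(ab + a) ≤ M(a(2b+1))`.
-/

open Finset

def bitWeightSum (q m : ℕ) : ℕ := ∑ j ∈ range m, q ^ j.bitIndices.length

namespace bitWeightSum

variable (q : ℕ)

@[simp] lemma zero : bitWeightSum q 0 = 0 := rfl

@[simp] lemma one : bitWeightSum q 1 = 1 := by simp [bitWeightSum]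

lemma succ (m : ℕ) : bitWeightSum q (m + 1) = bitWeightSum q m + q ^ m.bitIndices.length :=
  sum_range_succ _ _

lemma two_mul (m : ℕ) : bitWeightSum q (2 * m) = (q + 1) * bitWeightSum q m := by
  induction m with
  | zero => rfl
  | succ m ih =>
    rw [show 2 * (m + 1) = 2 * m + 1 + 1 by ring, succ, succ, ih, succ,
      Nat.bitIndices_two_mul_add_one, Nat.bitIndices_two_mul]
    simp only [List.length_cons, List.length_map, pow_succ]
    ring

lemma two_mul_add_one (m : ℕ) :
    bitWeightSum q (2 * m + 1) = q * bitWeightSum q m + bitWeightSum q (m + 1) := by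
  rw [succ, two_mul, Nat.bitIndices_two_mul, List.length_map, succ]
  ring

lemma monotone : Monotone (bitWeightSum q) := fun _ _ h =>
  sum_le_sum_of_subset (range_mono h)

lemma strictMono {q : ℕ} (hq : 1 ≤ q) : StrictMono (bitWeightSum q) :=
  strictMono_nat_of_lt_succ fun m => by
    rw [succ]
    exact Nat.lt_add_of_pos_right (pow_pos hq _)

lemma two_pow_add (k : ℕ) : ∀ t ≤ 2 ^ k,
    bitWeightSum q (2 ^ k + t) = (q + 1) ^ k + q * bitWeightSum q t := by
  induction k with
  | zero =>
    intro t ht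
    interval_cases t
    · simp
    · simpa [add_comm] using two_mul q 1
  | succ k ih =>
    intro t ht
    obtain ⟨s, rfl | rfl⟩ := Nat.even_or_odd' t
    · rw [pow_succ', ← mul_add, two_mul, ih s (by omega), two_mul]
      ring
    · rw [pow_succ', ← add_assoc, ← mul_add, two_mul_add_one, add_assoc, ih s (by omega),
        ih (s + 1) (by omega), two_mul_add_one]
      ring

lemma two_pow (k : ℕ) : bitWeightSum q (2 ^ k) = (q + 1) ^ k := by
  simpa using two_pow_add q k 0 (Nat.zero_le _)

lemma add_mul_le_of_le (u v : ℕ) (h : v ≤ u) :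
    bitWeightSum q u + q * bitWeightSum q v ≤ bitWeightSum q (u + v) := by
  rcases Nat.eq_zero_or_pos v with rfl | hv
  · simp
  obtain ⟨u, rfl | rfl⟩ := Nat.even_or_odd' u <;> obtain ⟨v, rfl | rfl⟩ := Nat.even_or_odd' v
  · have := add_mul_le_of_le u v (by omega)
    rw [← mul_add, two_mul, two_mul, two_mul, mul_left_comm, ← mul_add]
    exact Nat.mul_le_mul_left _ this
  · have h₁ := add_mul_le_of_le u v (by omega)
    have h₂ := add_mul_le_of_le u (v + 1) (by omega)
    rw [← add_assoc] at h₂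
    rw [show 2 * u + (2 * v + 1) = 2 * (u + v) + 1 by ring, two_mul, two_mul_add_one,
      two_mul_add_one]
    nlinarith [Nat.mul_le_mul_left q h₁]
  · have h₁ := add_mul_le_of_le u v (by omega)
    have h₂ := add_mul_le_of_le (u + 1) v (by omega)
    rw [add_right_comm] at h₂
    rw [show 2 * u + 1 + 2 * v = 2 * (u + v) + 1 by ring, two_mul, two_mul_add_one,
      two_mul_add_one]
    nlinarith [Nat.mul_le_mul_left q h₁]
  · rcases (show v ≤ u by omega).eq_or_lt with rfl | hvu
    · rw [← _root_.two_mul, two_mul, add_comm, add_one_mul]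
    have h₁ := add_mul_le_of_le (u + 1) v (by omega)
    have h₂ := add_mul_le_of_le u (v + 1) (by omega)
    rw [add_right_comm] at h₁
    rw [← add_assoc] at h₂
    have hcross : q * (q * bitWeightSum q v + bitWeightSum q (v + 1))
        ≤ q * (bitWeightSum q v + q * bitWeightSum q (v + 1)) := by
      nlinarith [Nat.le_mul_self q, monotone q (Nat.le_succ v)]
    rw [show 2 * u + 1 + (2 * v + 1) = 2 * (u + v + 1) by ring, two_mul, two_mul_add_one,
      two_mul_add_one]
    nlinarith [Nat.mul_le_mul_left q h₂]
termination_by u + v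

lemma mul_le (a b : ℕ) : bitWeightSum q a * bitWeightSum q b ≤ bitWeightSum q (a * b) := by
  rcases Nat.eq_zero_or_pos b with rfl | hb
  · simp
  obtain ⟨b, rfl | rfl⟩ := Nat.even_or_odd' b
  · have := mul_le a b
    rw [two_mul, mul_left_comm, _root_.mul_left_comm a, two_mul]
    exact Nat.mul_le_mul_left _ this
  · rcases Nat.eq_zero_or_pos b with rfl | hb'
    · simp
    have h₁ := mul_le a b
    have h₂ := mul_le a (b + 1)
    have h₃ := add_mul_le_of_le q (a * b + a) (a * b) (by omega)
    rw [mul_add_one] at h₂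
    rw [two_mul_add_one, show a * (2 * b + 1) = a * b + a + a * b by ring]
    nlinarith [Nat.mul_le_mul_left q h₁]
termination_by b

end bitWeightSum

lemma card_filter_fin_succ {α : Type*} [Fintype α] {r : ℕ} (P : α → (Fin r → α) → Bool) :
    #{e : Fin (r + 1) → α | P (e 0) (Fin.tail e)} = ∑ x, #{f : Fin r → α | P x f} := by
  simp only [card_filter]
  rw [← (Fin.consEquiv fun _ => α).sum_comp, Fintype.sum_prod_type]
  simp [Fin.consEquiv]

section edges

variable {n r : ℕ}

lemma vcond_succ (e : Fin (r + 1) → Fin n) (j : ℕ) : vcond e (j + 1) = vcond (Fin.tail e) j := by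
  unfold vcond
  split_ifs <;> first | rfl | omega

lemma edgeCond_succ (e : Fin (r + 1) → Fin n) (j : ℕ) (σ : List Bool) :
    edgeCond e (j + 1) σ = edgeCond (Fin.tail e) j σ := by
  induction σ generalizing j with
  | nil => exact vcond_succ e j
  | cons b σ ih => cases b <;> simp only [edgeCond, vcond_succ, ih]

lemma vcond_zero {q : ℕ} (e : Fin (r + 1) → Fin (q + 1)) : vcond e 0 = decide (e 0 = 0) := by
  rw [vcond, dif_pos r.succ_pos]
  simp only [Fin.mk_zero, Fin.val_eq_zero_iff]

lemma fval_nil (q r : ℕ) : fval (q + 1) (r + 1) [] = (q + 1) ^ r := by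
  have := card_filter_fin_succ (r := r) fun (x : Fin (q + 1)) _ => decide (x = 0)
  simp only [fval, Fset, edgeCond, vcond_zero]
  rw [this, Fin.sum_univ_succ]
  simp [Fin.succ_ne_zero]

lemma fval_false_cons (q r : ℕ) (σ : List Bool) :
    fval (q + 1) (r + 1) (false :: σ) = fval (q + 1) r σ := by
  have := card_filter_fin_succ (r := r) fun (x : Fin (q + 1)) f => decide (x = 0) && edgeCond f 0 σ
  simp only [fval, Fset, edgeCond, vcond_zero, zero_add, edgeCond_succ]
  rw [this, Fin.sum_univ_succ]
  simp [Fin.succ_ne_zero]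

lemma fval_true_cons (q r : ℕ) (σ : List Bool) :
    fval (q + 1) (r + 1) (true :: σ) = (q + 1) ^ r + q * fval (q + 1) r σ := by
  have := card_filter_fin_succ (r := r) fun (x : Fin (q + 1)) f => decide (x = 0) || edgeCond f 0 σ
  simp only [fval, Fset, edgeCond, vcond_zero, zero_add, edgeCond_succ]
  rw [this, Fin.sum_univ_succ]
  simp [Fin.succ_ne_zero]

end edges

def binaryIndex : ℕ → List Bool → ℕ
  | 0, _ => 0
  | r + 1, [] => 2 ^ r
  | r + 1, false :: σ => binaryIndex r σ
  | r + 1, true :: σ => 2 ^ r + binaryIndex r σ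

lemma binaryIndex_pos_lt {σ : List Bool} {r : ℕ} (h : σ.length < r) :
    0 < binaryIndex r σ ∧ binaryIndex r σ < 2 ^ r := by
  induction σ generalizing r with
  | nil =>
    obtain _ | r := r
    · simp at h
    simp [binaryIndex, pow_succ]
  | cons b σ ih =>
    obtain _ | r := r
    · simp at h
    have := ih (r := r) (by simpa using h)
    cases b <;> simp only [binaryIndex, pow_succ] <;> omega

lemma exists_binaryIndex_eq {r t : ℕ} (h₀ : 0 < t) (ht : t < 2 ^ r) :
    ∃ σ : List Bool, σ.length < r ∧ binaryIndex r σ = t := by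
  induction r generalizing t with
  | zero => omega
  | succ r ih =>
    rcases lt_trichotomy t (2 ^ r) with h | rfl | h
    · obtain ⟨σ, hσ, rfl⟩ := ih h₀ h
      exact ⟨false :: σ, by simpa using hσ, rfl⟩
    · exact ⟨[], by simp, rfl⟩
    · obtain ⟨σ, hσ, hσt⟩ := ih (t := t - 2 ^ r) (by omega) (by rw [pow_succ] at ht; omega)
      exact ⟨true :: σ, by simpa using hσ, by simp only [binaryIndex]; omega⟩

lemma fval_eq_bitWeightSum (q : ℕ) {σ : List Bool} {r : ℕ} (h : σ.length < r) :
    fval (q + 1) r σ = bitWeightSum q (binaryIndex r σ) := by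
  induction σ generalizing r with
  | nil =>
    obtain _ | r := r
    · simp at h
    simp [fval_nil, binaryIndex, bitWeightSum.two_pow]
  | cons b σ ih =>
    obtain _ | r := r
    · simp at h
    have hσ : σ.length < r := by simpa using h
    cases b
    · rw [fval_false_cons, ih hσ]; rfl
    · rw [fval_true_cons, ih hσ, binaryIndex.eq_4,
        bitWeightSum.two_pow_add q r _ (binaryIndex_pos_lt hσ).2.le]

lemma mem_PsiSet {σ : List Bool} {r : ℕ} : σ ∈ PsiSet r ↔ σ.length < r := by
  simp only [PsiSet, mem_biUnion, mem_range, mem_image, mem_univ, true_and]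
  constructor
  · rintro ⟨m, hm, f, rfl⟩
    simpa using hm
  · exact fun h => ⟨σ.length, h, σ.get, List.ofFn_get σ⟩

lemma Nvals_eq_image (q r : ℕ) : Nvals (q + 1) r = (range (2 ^ r + 1)).image (bitWeightSum q) := by
  ext x
  simp only [Nvals, mem_insert, mem_image, mem_range, mem_PsiSet]
  constructor
  · rintro (rfl | rfl | ⟨σ, hσ, rfl⟩)
    · exact ⟨0, by positivity, rfl⟩
    · exact ⟨2 ^ r, by omega, bitWeightSum.two_pow q r⟩
    · have := binaryIndex_pos_lt hσ
      exact ⟨binaryIndex r σ, by omega, (fval_eq_bitWeightSum q hσ).symm⟩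
  · rintro ⟨i, hi, rfl⟩
    rcases Nat.eq_zero_or_pos i with rfl | hi₀
    · exact .inl rfl
    rcases (Nat.lt_succ_iff.mp hi).eq_or_lt with rfl | hir
    · exact .inr (.inl (bitWeightSum.two_pow q r))
    · obtain ⟨σ, hσ, rfl⟩ := exists_binaryIndex_eq hi₀ hir
      exact .inr (.inr ⟨σ, hσ, fval_eq_bitWeightSum q hσ⟩)

lemma Nseq_eq_bitWeightSum {q r i : ℕ} (hq : 1 ≤ q) (hi : i ≤ 2 ^ r) :
    Nseq (q + 1) r i = bitWeightSum q i := by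
  have hmono := bitWeightSum.strictMono hq
  have hsort : Finset.sort (Nvals (q + 1) r) (· ≤ ·)
      = (List.range (2 ^ r + 1)).map (bitWeightSum q) := by
    have := StrictMonoOn.map_finsetSort ⟨_, hmono.injective⟩ (range (2 ^ r + 1))
      (hmono.strictMonoOn _)
    rw [sort_range, map_eq_image] at this
    rw [Nvals_eq_image]
    exact this.symm
  rw [Nseq, hsort, List.getD_eq_getElem _ _ (by simpa using Nat.lt_succ_of_le hi)]
  simp

theorem stmt12 (n r a b : ℕ) (hn : 2 ≤ n) (ha : a ≤ 2 ^ r) (hb : b ≤ 2 ^ r)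
    (hab : a * b ≤ 2 ^ r) :
    Nseq n r a * Nseq n r b ≤ Nseq n r (a * b) := by
  obtain ⟨q, rfl⟩ : ∃ q, n = q + 1 := ⟨n - 1, by omega⟩
  have hq : 1 ≤ q := by omega
  rw [Nseq_eq_bitWeightSum hq ha, Nseq_eq_bitWeightSum hq hb, Nseq_eq_bitWeightSum hq hab]
  exact bitWeightSum.mul_le q a b
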